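/- Soundness of propositional frame axioms for a sequence of conditional effects: let v₀ ∈ {⊤,⊥} and let a pattern h₁,…,h_k of happenings be given, where application counts are μ(h_i) ∈ ℕ. Define σ₀(v) = (v₀ = ⊤) and inductively σ_i(v) = σ_{i−1}(v) ∨ (μ(h_i) > 0) if h_i sets v := ⊤, σ_i(v) = σ_{i−1}(v) ∧ (μ(h_i) = 0) if h_i sets v := ⊥, and σ_i(v) = σ_{i−1}(v) otherwise. Then σ_k(v) is true iff the sequential execution of h₁,…,h_k (executing h_i exactly when μ(h_i) > 0) starting from value v₀ ends with v = ⊤. -/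

import Mathlib

/-- A happening either sets the Boolean variable to `true` (`some true`),
sets it to `false` (`some false`), or leaves it unchanged (`none`); it is
executed iff its application count is positive. -/
def execStep (v : Bool) (h : Option Bool × ℕ) : Bool :=
  if h.2 > 0 then (match h.1 with | some b => b | none => v) else v

/-- The symbolic frame-axiom update `σ_i` of the pattern encoding. -/
def sigmaStep (v : Bool) (h : Option Bool × ℕ) : Bool :=
  match h.1 with
  | some true => v || decide (h.2 > 0)
  | some false => v && decide (h.2 = 0)
  | none => v

theorem sigmaStep_eq_execStep : sigmaStep = execStep := by
  funext v ⟨effect, count⟩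
  rcases effect with _ | _ | _ <;> cases count <;> simp [sigmaStep, execStep]

/-- Soundness of the propositional frame axioms: `σ_k(v)` is true iff the
sequential execution of the happenings `h₁,…,h_k` (each executed iff its
application count is positive) starting from `v₀` ends with `v = ⊤`. -/
theorem prop_frame_sound (v₀ : Bool) (pat : List (Option Bool × ℕ)) :
    (pat.foldl sigmaStep v₀ = true) ↔ (pat.foldl execStep v₀ = true) := by
  rw [sigmaStep_eq_execStep]
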